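/- arXiv:1710.00130 — 2 statements merged into one kernel-verified Lean document; each statement's English description precedes it below -/
import Mathlib

section
/- An elementary collapse preserves homotopy type: if σ is a free face of a finite simplicial complex C (i.e., σ is a nonempty face strictly contained in exactly one other face of C), then the geometric realization of C deformation retracts onto the geometric realization of C with σ and the unique face properly containing σ removed. -/
/-!
Write `τ = insert v σ`. Moving a point of `|τ|` along `d = ∑_{u ∈ σ} (v - u)` lowers its
barycentric coordinates at the vertices of `σ` at a common rate and raises the one at `v`;
moving it by `m(x) d`, where `m(x)` is the smallest of its `σ`-coordinates, makes one of them
vanish, so the point ends on a face of `τ` not containing `σ`. A point of `|τ|` lying on any face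
not containing `σ` already has such a vanishing coordinate, so `m = 0` there. Hence, with `m`
extended by `0` off `|τ|`, the straight-line homotopy `x ↦ x + t m(x) d` is a deformation
retraction of `|C|` onto the remaining faces, continuous because it is continuous on each of the
finitely many closed faces.
-/

open Finset Geometry

section

variable {E : Type*} [NormedAddCommGroup E] [NormedSpace ℝ E]

theorem AffineIndependent.exists_continuous_barycentricCoords {ι : Type*} [Fintype ι] {p : ι → E}
    (hp : AffineIndependent ℝ p) :
    ∃ c : E → ι → ℝ, Continuous c ∧ ∀ w : ι → ℝ, ∑ i, w i = 1 → c (∑ i, w i • p i) = w := by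
  let A : (ι → ℝ) →ₗ[ℝ] E × ℝ :=
    (Fintype.linearCombination ℝ p).prod (Fintype.linearCombination ℝ 1)
  have hA_apply (w : ι → ℝ) : A w = (∑ i, w i • p i, ∑ i, w i) := by
    simp [A, Fintype.linearCombination_apply]
  have hA : Function.Injective A := by
    rw [← LinearMap.ker_eq_bot, LinearMap.ker_eq_bot']
    intro w hw
    rw [hA_apply, Prod.mk_eq_zero] at hw
    funext i
    exact hp.eq_zero_of_sum_eq_zero hw.2 hw.1 i (mem_univ i)
  -- a linear map out of the finite-dimensional `range A` is continuous; Hahn–Banach extends it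
  let f : LinearMap.range A →L[ℝ] (ι → ℝ) :=
    LinearMap.toContinuousLinearMap (LinearEquiv.ofInjective A hA).symm
  obtain ⟨g, hg⟩ := f.exist_extension_of_finiteDimensional_range
  refine ⟨fun x => g (x, 1), by fun_prop, fun w hw => ?_⟩
  have hgA : g (A w) = w := by
    have hfA := congr($hg ⟨A w, LinearMap.mem_range_self A w⟩)
    simp only [f, ContinuousLinearMap.comp_apply, Submodule.subtypeL_apply] at hfA
    rw [← hfA]
    exact (LinearEquiv.ofInjective A hA).symm_apply_apply w
  rwa [hA_apply, hw] at hgA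

def Finset.IsBarycentricCoords (s : Finset E) (c : E → E → ℝ) : Prop :=
  ∀ w : E → ℝ, ∑ u ∈ s, w u = 1 → ∀ u ∈ s, c (∑ v ∈ s, w v • v) u = w u

theorem Finset.exists_continuous_isBarycentricCoords {s : Finset E}
    (hs : AffineIndependent ℝ ((↑) : s → E)) :
    ∃ c : E → E → ℝ, Continuous c ∧ s.IsBarycentricCoords c := by
  classical
  obtain ⟨c, hc, hcw⟩ := hs.exists_continuous_barycentricCoords
  refine ⟨fun x u => if hu : u ∈ s then c x ⟨u, hu⟩ else 0, ?_, fun w hw u hu => ?_⟩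
  · refine continuous_pi fun u => ?_
    split_ifs
    · exact (continuous_apply _).comp hc
    · exact continuous_const
  · have := hcw (fun i => w i) (by rwa [sum_coe_sort s w])
    rw [sum_coe_sort s fun u => w u • u] at this
    simp [hu, this]

theorem Finset.IsBarycentricCoords.weights_of_mem_convexHull {s t : Finset E} {c : E → E → ℝ}
    (hc : s.IsBarycentricCoords c) (hts : t ⊆ s) {x : E} (hx : x ∈ convexHull ℝ (t : Set E)) :
    (∀ u ∈ s, 0 ≤ c x u) ∧ (∀ u ∈ s, u ∉ t → c x u = 0) ∧
      ∑ u ∈ s, c x u = 1 ∧ ∑ u ∈ s, c x u • u = x := by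
  classical
  obtain ⟨w, hw0, hw1, hwx⟩ := mem_convexHull'.mp hx
  set w' : E → ℝ := fun u => if u ∈ t then w u else 0
  have hw'_zero : ∀ u ∈ s, u ∉ t → w' u = 0 := fun u _ hut => if_neg hut
  have hw'0 : ∀ u ∈ s, 0 ≤ w' u := fun u _ => by
    by_cases hut : u ∈ t
    · exact (if_pos hut).trans_ge (hw0 u hut)
    · exact (if_neg hut).symm.le
  have hw'1 : ∑ u ∈ s, w' u = 1 := by
    rw [← sum_subset hts hw'_zero, sum_congr rfl fun u hu => if_pos hu, hw1]
  have hw'x : ∑ u ∈ s, w' u • u = x := by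
    rw [← sum_subset hts fun u hu hut => by rw [hw'_zero u hu hut, zero_smul], ← hwx]
    exact sum_congr rfl fun u hu => by rw [show w' u = w u from if_pos hu]
  have hcx : ∀ u ∈ s, c x u = w' u := hw'x ▸ hc w' hw'1
  refine ⟨fun u hu => (hcx u hu).trans_ge (hw'0 u hu),
    fun u hu hut => (hcx u hu).trans (hw'_zero u hu hut), ?_, ?_⟩
  · rwa [sum_congr rfl hcx]
  · rwa [sum_congr rfl fun u hu => by rw [hcx u hu]]

theorem Geometry.SimplicialComplex.continuous_of_continuousOn_faces {X : Type*}
    [TopologicalSpace X] {C : SimplicialComplex ℝ E} (hfin : C.faces.Finite) {f : C.space → X}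
    (hf : ∀ ρ ∈ C.faces, ContinuousOn f ((↑) ⁻¹' convexHull ℝ (ρ : Set E))) : Continuous f := by
  have : Finite C.faces := hfin.to_subtype
  refine LocallyFinite.continuous (locallyFinite_of_finite
    fun ρ : C.faces => ((↑) ⁻¹' convexHull ℝ ((ρ : Finset E) : Set E) : Set C.space))
    ?_ (fun ρ => ?_) (fun ρ => hf ρ ρ.2)
  · refine Set.eq_univ_of_forall fun x => ?_
    obtain ⟨ρ, hρ, hxρ⟩ := C.mem_space_iff.mp x.2
    exact Set.mem_iUnion.mpr ⟨⟨ρ, hρ⟩, hxρ⟩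
  · exact (((ρ : Finset E).finite_toSet.isCompact_convexHull (𝕜 := ℝ)).isClosed).preimage
      continuous_subtype_val

def collapseDirection (σ : Finset E) (v : E) : E := ∑ u ∈ σ, (v - u)

section Collapse

variable [DecidableEq E]

theorem add_smul_collapseDirection_mem_convexHull {σ t : Finset E} {v : E} (hv : v ∉ σ)
    {w : E → ℝ} (hw0 : 0 ≤ w v) (hw1 : ∑ u ∈ insert v σ, w u = 1)
    {x : E} (hwx : ∑ u ∈ insert v σ, w u • u = x) {s : ℝ} (hs0 : 0 ≤ s) (hsw : ∀ u ∈ σ, s ≤ w u)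
    (ht : t ⊆ insert v σ) (hvt : v ∈ t) (hwt : ∀ u ∈ σ, u ∉ t → w u = s) :
    x + s • collapseDirection σ v ∈ convexHull ℝ (t : Set E) := by
  -- move mass `s` from every vertex of `σ` to `v`
  set w' : E → ℝ := fun u => if u ∈ σ then w u - s else w u + #σ * s
  have hw'σ : ∀ u ∈ σ, w' u = w u - s := fun u hu => if_pos hu
  have hw'v : w' v = w v + #σ * s := if_neg hv
  have hw'_zero : ∀ u ∈ insert v σ, u ∉ t → w' u = 0 := by
    intro u hu hut
    have huσ : u ∈ σ := (mem_insert.mp hu).resolve_left (by rintro rfl; exact hut hvt)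
    rw [hw'σ u huσ, hwt u huσ hut, sub_self]
  have hsum : ∑ u ∈ t, w' u = 1 := by
    rw [sum_subset ht hw'_zero, sum_insert hv, hw'v, sum_congr rfl hw'σ, sum_sub_distrib,
      sum_const, nsmul_eq_mul, ← hw1, sum_insert hv]
    ring
  have hsmul : ∑ u ∈ t, w' u • u = x + s • collapseDirection σ v := by
    rw [← hwx, sum_subset ht fun u hu hut => by rw [hw'_zero u hu hut, zero_smul], sum_insert hv,
      sum_insert hv, hw'v, sum_congr rfl fun u hu => by rw [hw'σ u hu], collapseDirection,
      smul_sum]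
    simp only [sub_smul, smul_sub, add_smul, sum_sub_distrib, sum_const, ← Nat.cast_smul_eq_nsmul ℝ,
      smul_smul]
    abel
  refine mem_convexHull'.mpr ⟨w', fun u hu => ?_, hsum, hsmul⟩
  obtain rfl | huσ := mem_insert.mp (ht hu)
  · rw [hw'v]; positivity
  · rw [hw'σ u huσ]; exact sub_nonneg.mpr (hsw u huσ)

variable {C : SimplicialComplex ℝ E} {σ : Finset E} {v : E} {c : E → E → ℝ}

noncomputable def collapseLength (hσ : σ.Nonempty) (v : E) (c : E → E → ℝ) : E → ℝ :=
  (convexHull ℝ ((insert v σ : Finset E) : Set E)).indicator fun x => σ.inf' hσ (c x)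

theorem collapseLength_nonneg (hσ : σ.Nonempty) (hc : (insert v σ).IsBarycentricCoords c)
    (x : E) : 0 ≤ collapseLength hσ v c x :=
  Set.indicator_nonneg (fun _ hx => le_inf' _ _ fun u hu =>
    (hc.weights_of_mem_convexHull subset_rfl hx).1 u (mem_insert_of_mem hu)) x

theorem collapseLength_eq_zero (hσ : σ.Nonempty) (hτ : insert v σ ∈ C.faces)
    (hc : (insert v σ).IsBarycentricCoords c) {ρ : Finset E} (hρ : ρ ∈ C.faces) (hσρ : ¬σ ⊆ ρ)
    {x : E} (hx : x ∈ convexHull ℝ (ρ : Set E)) : collapseLength hσ v c x = 0 := by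
  refine le_antisymm ?_ (collapseLength_nonneg hσ hc x)
  by_cases hxτ : x ∈ convexHull ℝ ((insert v σ : Finset E) : Set E)
  · have hxρτ : x ∈ convexHull ℝ ((ρ ∩ insert v σ : Finset E) : Set E) := by
      rw [coe_inter]; exact C.inter_subset_convexHull hρ hτ ⟨hx, hxτ⟩
    obtain ⟨u, huσ, huρ⟩ := not_subset.mp hσρ
    have hcu : c x u = 0 := (hc.weights_of_mem_convexHull inter_subset_right hxρτ).2.1 u
      (mem_insert_of_mem huσ) fun hu => huρ (mem_of_mem_inter_left hu)
    rw [collapseLength, Set.indicator_of_mem hxτ]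
    exact (inf'_le _ huσ).trans hcu.le
  · rw [collapseLength, Set.indicator_of_notMem hxτ]

theorem continuous_collapseLength (hσ : σ.Nonempty) (hfin : C.faces.Finite)
    (hτ : insert v σ ∈ C.faces) (huniq : ∀ ρ ∈ C.faces, σ ⊂ ρ → ρ = insert v σ)
    (hcc : Continuous c) (hc : (insert v σ).IsBarycentricCoords c) :
    Continuous fun x : C.space => collapseLength hσ v c x := by
  have hmin : Continuous fun x => σ.inf' hσ (c x) :=
    Continuous.finset_inf'_apply hσ fun u _ => (continuous_apply u).comp hcc
  refine C.continuous_of_continuousOn_faces hfin fun ρ hρ => ?_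
  by_cases hσρ : σ ⊆ ρ
  · have hρτ : ρ ⊆ insert v σ := by
      obtain rfl | hσρ := hσρ.eq_or_ssubset
      · exact subset_insert v _
      · exact (huniq ρ hρ hσρ).le
    refine (hmin.comp continuous_subtype_val).continuousOn.congr fun x hx => ?_
    exact Set.indicator_of_mem (convexHull_mono (coe_subset.mpr hρτ) hx) _
  · exact continuousOn_const.congr fun x hx => collapseLength_eq_zero hσ hτ hc hρ hσρ hx

theorem add_smul_collapseDirection_mem_space (hσ : σ.Nonempty) (hv : v ∉ σ)
    (hτ : insert v σ ∈ C.faces) (hc : (insert v σ).IsBarycentricCoords c) {t : ℝ} (ht₀ : 0 ≤ t)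
    (ht₁ : t ≤ 1) {x : E} (hx : x ∈ C.space) :
    x + (t * collapseLength hσ v c x) • collapseDirection σ v ∈ C.space := by
  by_cases hxτ : x ∈ convexHull ℝ ((insert v σ : Finset E) : Set E)
  · obtain ⟨hc₀, -, hc₁, hcx⟩ := hc.weights_of_mem_convexHull subset_rfl hxτ
    have hlen : collapseLength hσ v c x = σ.inf' hσ (c x) := Set.indicator_of_mem hxτ _
    have hlen₀ := collapseLength_nonneg hσ hc x
    refine C.convexHull_subset_space hτ <| add_smul_collapseDirection_mem_convexHull hv
      (hc₀ v (mem_insert_self v σ)) hc₁ hcx (mul_nonneg ht₀ hlen₀) (fun u hu => ?_) subset_rfl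
      (mem_insert_self v σ) fun u hu hut => absurd (mem_insert_of_mem hu) hut
    exact (mul_le_of_le_one_left hlen₀ ht₁).trans (hlen ▸ inf'_le _ hu)
  · rwa [collapseLength, Set.indicator_of_notMem hxτ, mul_zero, zero_smul, add_zero]

theorem add_collapseLength_smul_collapseDirection_mem (hσ : σ.Nonempty) (hv : v ∉ σ)
    (hτ : insert v σ ∈ C.faces) (hc : (insert v σ).IsBarycentricCoords c) {x : E}
    (hx : x ∈ C.space) :
    x + collapseLength hσ v c x • collapseDirection σ v ∈
      ⋃ ρ ∈ C.faces \ {σ, insert v σ}, convexHull ℝ (ρ : Set E) := by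
  simp only [Set.mem_iUnion, Set.mem_sdiff, Set.mem_insert_iff, Set.mem_singleton_iff, not_or,
    exists_prop]
  by_cases hxτ : x ∈ convexHull ℝ ((insert v σ : Finset E) : Set E)
  · obtain ⟨u₀, hu₀, hmin⟩ := exists_mem_eq_inf' hσ (c x)
    obtain ⟨hc₀, -, hc₁, hcx⟩ := hc.weights_of_mem_convexHull subset_rfl hxτ
    have hlen : collapseLength hσ v c x = c x u₀ := (Set.indicator_of_mem hxτ _).trans hmin
    have hv_erase : v ∈ (insert v σ).erase u₀ :=
      mem_erase.mpr ⟨fun h => hv (h ▸ hu₀), mem_insert_self v σ⟩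
    refine ⟨(insert v σ).erase u₀, ⟨C.down_closed hτ (erase_subset _ _) ⟨v, hv_erase⟩,
      fun h => hv (h ▸ hv_erase), fun h => notMem_erase u₀ _ (h ▸ mem_insert_of_mem hu₀)⟩, ?_⟩
    rw [hlen]
    refine add_smul_collapseDirection_mem_convexHull hv (hc₀ v (mem_insert_self v σ)) hc₁
      hcx (hc₀ u₀ (mem_insert_of_mem hu₀)) (fun u hu => ?_) (erase_subset _ _) hv_erase
      fun u hu hut => ?_
    · rw [← hmin]; exact inf'_le _ hu
    · rw [of_not_not fun h => hut (mem_erase.mpr ⟨h, mem_insert_of_mem hu⟩)]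
  · obtain ⟨ρ, hρ, hxρ⟩ := C.mem_space_iff.mp hx
    rw [collapseLength, Set.indicator_of_notMem hxτ, zero_smul, add_zero]
    refine ⟨ρ, ⟨hρ, ?_, fun h => hxτ (h ▸ hxρ)⟩, hxρ⟩
    rintro rfl
    exact hxτ (convexHull_mono (coe_subset.mpr (subset_insert v ρ)) hxρ)

end Collapse

end

/-- An elementary collapse preserves homotopy type: if `σ` is a free face of a
finite simplicial complex `C` (contained in exactly one other face `τ`), then the geometric
realization of `C` (strongly) deformation retracts onto the realization of `C − {σ, τ}`. -/
theorem elementary_collapse_deformation_retract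
    {E : Type*} [NormedAddCommGroup E] [NormedSpace ℝ E]
    (C : Geometry.SimplicialComplex ℝ E) (hfin : C.faces.Finite)
    (σ τ : Finset E) (hσ : σ ∈ C.faces) (hτ : τ ∈ C.faces) (hst : σ ⊂ τ)
    (huniq : ∀ ρ ∈ C.faces, σ ⊂ ρ → ρ = τ) :
    ∃ H : C(unitInterval × C.space, C.space),
      (∀ x : C.space, H (0, x) = x) ∧
      (∀ x : C.space, (H (1, x) : E) ∈ ⋃ s ∈ C.faces \ {σ, τ}, convexHull ℝ (s : Set E)) ∧
      (∀ (t : unitInterval) (x : C.space),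
        (x : E) ∈ (⋃ s ∈ C.faces \ {σ, τ}, convexHull ℝ (s : Set E)) → H (t, x) = x) := by
  classical
  obtain ⟨v, hvτ, hv⟩ := exists_of_ssubset hst
  obtain rfl : τ = insert v σ := (huniq _ (C.down_closed hτ (insert_subset hvτ hst.subset)
    (insert_nonempty v σ)) (ssubset_insert hv)).symm
  have hσne : σ.Nonempty := nonempty_iff_ne_empty.mpr fun h => C.empty_notMem (h ▸ hσ)
  obtain ⟨c, hcc, hc⟩ := exists_continuous_isBarycentricCoords (C.indep hτ)
  have hlen := (continuous_collapseLength hσne hfin hτ huniq hcc hc).comp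
    (continuous_snd (X := unitInterval))
  refine ⟨⟨fun p => ⟨p.2 + (p.1 * collapseLength hσne v c p.2) • collapseDirection σ v,
    add_smul_collapseDirection_mem_space hσne hv hτ hc p.1.2.1 p.1.2.2 p.2.2⟩,
    Continuous.subtype_mk (by fun_prop) _⟩,
    fun x => ?_, fun x => ?_, fun t x hx => ?_⟩
  · ext; simp
  · simpa using add_collapseLength_smul_collapseDirection_mem hσne hv hτ hc x.2
  · obtain ⟨ρ, ⟨hρ, hρστ⟩, hxρ⟩ := Set.mem_iUnion₂.mp hx
    have hσρ : ¬σ ⊆ ρ := fun hσρ => hρστ <| by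
      obtain rfl | hσρ := hσρ.eq_or_ssubset
      exacts [Or.inl rfl, Or.inr (huniq ρ hρ hσρ)]
    ext; simp [collapseLength_eq_zero hσne hτ hc hρ hσρ hxρ]
end

section
/- The join of two collapsible finite simplicial complexes is collapsible; in particular, the join of a collapsible complex with a single vertex (a cone) is collapsible. -/
variable {V W : Type*} [DecidableEq V] [DecidableEq W]

/-- One elementary collapse: remove a free face `σ` together with the unique face `τ`
properly containing it. -/
def CollapseStep (C D : Finset (Finset V)) : Prop :=
  ∃ σ τ : Finset V, σ ∈ C ∧ τ ∈ C ∧ σ ⊂ τ ∧ (∀ ρ ∈ C, σ ⊂ ρ → ρ = τ) ∧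
    D = (C.erase σ).erase τ

/-- A complex is collapsible if it collapses to a single vertex. -/
def Collapsible (C : Finset (Finset V)) : Prop :=
  ∃ v : V, Relation.ReflTransGen CollapseStep C {{v}}

/-- The join `A ∗ B` of complexes on disjoint vertex sets (realized as `V ⊕ W`): its faces
are the unions `α ∪ β` with `α ∈ A` or `α = ∅`, `β ∈ B` or `β = ∅`, not both empty. -/
def joinC (A : Finset (Finset V)) (B : Finset (Finset W)) : Finset (Finset (V ⊕ W)) :=
  (((insert ∅ A) ×ˢ (insert ∅ B)).image
    (fun p => p.1.image Sum.inl ∪ p.2.image Sum.inr)).erase ∅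

/-! ### Auxiliary machinery -/

/-- The basic face of the join built from `α` and `β`. -/
def jn (α : Finset V) (β : Finset W) : Finset (V ⊕ W) :=
  α.image Sum.inl ∪ β.image Sum.inr

lemma jn_subset {α γ : Finset V} {β δ : Finset W} :
    jn α β ⊆ jn γ δ ↔ α ⊆ γ ∧ β ⊆ δ := by
  constructor
  · intro h
    constructor
    · intro x hx
      have hx' : (Sum.inl x : V ⊕ W) ∈ jn γ δ := h (by simp [jn, hx])
      simpa [jn] using hx'
    · intro x hx
      have hx' : (Sum.inr x : V ⊕ W) ∈ jn γ δ := h (by simp [jn, hx])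
      simpa [jn] using hx'
  · rintro ⟨h1, h2⟩
    exact Finset.union_subset_union (Finset.image_subset_image h1)
      (Finset.image_subset_image h2)

lemma jn_inj {α γ : Finset V} {β δ : Finset W} :
    jn α β = jn γ δ ↔ α = γ ∧ β = δ := by
  constructor
  · intro h
    have h1 := jn_subset.mp h.le
    have h2 := jn_subset.mp h.ge
    exact ⟨subset_antisymm h1.1 h2.1, subset_antisymm h1.2 h2.2⟩
  · rintro ⟨rfl, rfl⟩; rfl

lemma jn_eq_empty {α : Finset V} {β : Finset W} :
    jn α β = ∅ ↔ α = ∅ ∧ β = ∅ := by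
  simp [jn, Finset.union_eq_empty]

lemma mem_joinC {A : Finset (Finset V)} {B : Finset (Finset W)} {s : Finset (V ⊕ W)} :
    s ∈ joinC A B ↔
      ∃ α β, α ∈ insert ∅ A ∧ β ∈ insert ∅ B ∧ ¬(α = ∅ ∧ β = ∅) ∧ s = jn α β := by
  unfold joinC
  simp only [Finset.mem_erase, Finset.mem_image, Finset.mem_product, Prod.exists]
  constructor
  · rintro ⟨hne, α, β, ⟨hα, hβ⟩, rfl⟩
    refine ⟨α, β, hα, hβ, ?_, rfl⟩
    rintro ⟨rfl, rfl⟩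
    exact hne (by simp [jn])
  · rintro ⟨α, β, hα, hβ, hne, rfl⟩
    refine ⟨?_, α, β, ⟨hα, hβ⟩, rfl⟩
    intro h
    exact hne (jn_eq_empty.mp h)

lemma collapseStep_subset {X : Type*} [DecidableEq X] {C D : Finset (Finset X)}
    (h : CollapseStep C D) : D ⊆ C := by
  obtain ⟨σ, τ, -, -, -, -, rfl⟩ := h
  exact (Finset.erase_subset _ _).trans (Finset.erase_subset _ _)

/-- Generic simultaneous-collapse lemma: a family of matched pairs `(p α, q α)`
indexed by `α ∈ S` can be collapsed away (in order of decreasing cardinality of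
the index), leaving `C₀`. -/
lemma genCollapse {X : Type*} [DecidableEq X] (C₀ : Finset (Finset X))
    (p q : Finset V → Finset X) :
    ∀ (n : ℕ) (S : Finset (Finset V)), S.card ≤ n →
    (∀ α ∈ S, p α ⊂ q α) →
    (∀ α ∈ S, ∀ ρ ∈ C₀, ¬ p α ⊂ ρ) →
    (∀ α ∈ S, ∀ γ ∈ S, p α ⊂ p γ → α.card < γ.card) →
    (∀ α ∈ S, ∀ γ ∈ S, p α ⊂ q γ → α = γ ∨ α.card < γ.card) →
    (∀ α ∈ S, p α ∉ C₀) →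
    (∀ α ∈ S, q α ∉ C₀) →
    (∀ α ∈ S, ∀ γ ∈ S, p α = p γ → α = γ) →
    (∀ α ∈ S, ∀ γ ∈ S, q α = q γ → α = γ) →
    (∀ α ∈ S, ∀ γ ∈ S, p α ≠ q γ) →
    Relation.ReflTransGen CollapseStep (C₀ ∪ S.image p ∪ S.image q) C₀ := by
  intro n
  induction n with
  | zero =>
    intro S hS _ _ _ _ _ _ _ _ _
    have : S = ∅ := Finset.card_eq_zero.mp (Nat.le_zero.mp hS)
    subst this
    simpa using Relation.ReflTransGen.refl
  | succ n ih =>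
    intro S hS hpq h1 h2 h3 h4p h4q h5p h5q h5pq
    rcases S.eq_empty_or_nonempty with rfl | hne
    · simpa using Relation.ReflTransGen.refl
    obtain ⟨α, hαS, hmax⟩ := S.exists_max_image Finset.card hne
    set S' := S.erase α with hS'
    have hmemp : p α ∈ C₀ ∪ S.image p ∪ S.image q := by
      simp only [Finset.mem_union, Finset.mem_image]
      exact Or.inl (Or.inr ⟨α, hαS, rfl⟩)
    have hmemq : q α ∈ C₀ ∪ S.image p ∪ S.image q := by
      simp only [Finset.mem_union, Finset.mem_image]
      exact Or.inr ⟨α, hαS, rfl⟩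
    have hfree : ∀ ρ ∈ C₀ ∪ S.image p ∪ S.image q, p α ⊂ ρ → ρ = q α := by
      intro ρ hρ hsub
      simp only [Finset.mem_union, Finset.mem_image] at hρ
      rcases hρ with (hρ | ⟨γ, hγ, rfl⟩) | ⟨γ, hγ, rfl⟩
      · exact absurd hsub (h1 α hαS ρ hρ)
      · exact absurd (hmax γ hγ) (not_le.mpr (h2 α hαS γ hγ hsub))
      · rcases h3 α hαS γ hγ hsub with rfl | hlt
        · rfl
        · exact absurd (hmax γ hγ) (not_le.mpr hlt)
    have herase :
        ((C₀ ∪ S.image p ∪ S.image q).erase (p α)).erase (q α)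
          = C₀ ∪ S'.image p ∪ S'.image q := by
      ext s
      simp only [Finset.mem_erase, Finset.mem_union, Finset.mem_image]
      constructor
      · rintro ⟨hsq, hsp, (hs | ⟨γ, hγ, rfl⟩) | ⟨γ, hγ, rfl⟩⟩
        · exact Or.inl (Or.inl hs)
        · have hγα : γ ≠ α := by rintro rfl; exact hsp rfl
          exact Or.inl (Or.inr ⟨γ, Finset.mem_erase.mpr ⟨hγα, hγ⟩, rfl⟩)
        · have hγα : γ ≠ α := by rintro rfl; exact hsq rfl
          exact Or.inr ⟨γ, Finset.mem_erase.mpr ⟨hγα, hγ⟩, rfl⟩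
      · rintro ((hs | ⟨γ, hγ, rfl⟩) | ⟨γ, hγ, rfl⟩)
        · refine ⟨fun h => h4q α hαS (h ▸ hs), fun h => h4p α hαS (h ▸ hs),
            Or.inl (Or.inl hs)⟩
        · obtain ⟨hγα, hγS⟩ := Finset.mem_erase.mp hγ
          refine ⟨fun h => h5pq γ hγS α hαS h, fun h => hγα (h5p γ hγS α hαS h),
            Or.inl (Or.inr ⟨γ, hγS, rfl⟩)⟩
        · obtain ⟨hγα, hγS⟩ := Finset.mem_erase.mp hγ
          refine ⟨fun h => hγα (h5q γ hγS α hαS h),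
            fun h => h5pq α hαS γ hγS h.symm, Or.inr ⟨γ, hγS, rfl⟩⟩
    have step : CollapseStep (C₀ ∪ S.image p ∪ S.image q)
        (C₀ ∪ S'.image p ∪ S'.image q) :=
      ⟨p α, q α, hmemp, hmemq, hpq α hαS, hfree, herase.symm⟩
    have hsub : S' ⊆ S := Finset.erase_subset _ _
    have hcard : S'.card ≤ n := by
      rw [hS', Finset.card_erase_of_mem hαS]
      have := Finset.card_pos.mpr hne
      omega
    refine Relation.ReflTransGen.head step (ih S' hcard ?_ ?_ ?_ ?_ ?_ ?_ ?_ ?_ ?_)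
    all_goals intro a ha
    · exact hpq a (hsub ha)
    · exact h1 a (hsub ha)
    · exact fun γ hγ => h2 a (hsub ha) γ (hsub hγ)
    · exact fun γ hγ => h3 a (hsub ha) γ (hsub hγ)
    · exact h4p a (hsub ha)
    · exact h4q a (hsub ha)
    · exact fun γ hγ => h5p a (hsub ha) γ (hsub hγ)
    · exact fun γ hγ => h5q a (hsub ha) γ (hsub hγ)
    · exact fun γ hγ => h5pq a (hsub ha) γ (hsub hγ)

/-- Transporting a single collapse step of `B` to a collapse of the join. -/
lemma join_step (A : Finset (Finset V)) {B B' : Finset (Finset W)} (hB : (∅ : Finset W) ∉ B)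
    (h : CollapseStep B B') :
    Relation.ReflTransGen CollapseStep (joinC A B) (joinC A B') := by
  obtain ⟨σ, τ, hσ, hτ, hst, hfree, rfl⟩ := h
  have hσne : σ ≠ ∅ := by rintro rfl; exact hB hσ
  have hτne : τ ≠ ∅ := by rintro rfl; exact hB hτ
  have hστ : σ ≠ τ := hst.ne
  set B' := (B.erase σ).erase τ with hB'
  have hσB' : σ ∉ B' := by simp [hB']
  have hτB' : τ ∉ B' := by simp [hB', Finset.mem_erase]
  have hkey : joinC A B
      = joinC A B' ∪ (insert ∅ A).image (fun α => jn α σ)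
          ∪ (insert ∅ A).image (fun α => jn α τ) := by
    ext s
    simp only [Finset.mem_union, Finset.mem_image, mem_joinC]
    constructor
    · rintro ⟨α, β, hα, hβ, hne, rfl⟩
      by_cases hβσ : β = σ
      · exact Or.inl (Or.inr ⟨α, hα, by rw [hβσ]⟩)
      by_cases hβτ : β = τ
      · exact Or.inr ⟨α, hα, by rw [hβτ]⟩
      refine Or.inl (Or.inl ⟨α, β, hα, ?_, hne, rfl⟩)
      rcases Finset.mem_insert.mp hβ with rfl | hβB
      · exact Finset.mem_insert_self _ _
      · exact Finset.mem_insert_of_mem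
          (Finset.mem_erase.mpr ⟨hβτ, Finset.mem_erase.mpr ⟨hβσ, hβB⟩⟩)
    · rintro ((⟨α, β, hα, hβ, hne, rfl⟩ | ⟨α, hα, rfl⟩) | ⟨α, hα, rfl⟩)
      · refine ⟨α, β, hα, ?_, hne, rfl⟩
        rcases Finset.mem_insert.mp hβ with rfl | hβB
        · exact Finset.mem_insert_self _ _
        · exact Finset.mem_insert_of_mem
            ((Finset.erase_subset _ _).trans (Finset.erase_subset _ _) hβB)
      · exact ⟨α, σ, hα, Finset.mem_insert_of_mem hσ, by simp [hσne], rfl⟩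
      · exact ⟨α, τ, hα, Finset.mem_insert_of_mem hτ, by simp [hτne], rfl⟩
  rw [hkey]
  refine genCollapse (joinC A B') (fun α => jn α σ) (fun α => jn α τ)
    (insert ∅ A).card (insert ∅ A) le_rfl ?_ ?_ ?_ ?_ ?_ ?_ ?_ ?_ ?_
  · intro α _
    refine ⟨jn_subset.mpr ⟨le_rfl, hst.subset⟩, fun h => ?_⟩
    exact hστ ((jn_inj.mp (subset_antisymm (jn_subset.mpr ⟨le_rfl, hst.subset⟩) h)).2)
  · intro α _ ρ hρ hsub
    obtain ⟨γ, δ, hγ, hδ, hne, rfl⟩ := mem_joinC.mp hρ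
    have hσδ : σ ⊆ δ := (jn_subset.mp hsub.subset).2
    have hδne : δ ≠ ∅ := fun h => hσne (Finset.subset_empty.mp (h ▸ hσδ))
    have hδB' : δ ∈ B' := (Finset.mem_insert.mp hδ).resolve_left hδne
    have hδB : δ ∈ B := (Finset.erase_subset _ _).trans (Finset.erase_subset _ _) hδB'
    rcases eq_or_lt_of_le (α := Finset W) hσδ with rfl | hlt
    · exact hσB' hδB'
    · exact hτB' ((hfree δ hδB hlt) ▸ hδB')
  · intro α _ γ _ hsub
    have h1 := (jn_subset.mp hsub.subset).1
    have : α ≠ γ := fun h => hsub.ne (by rw [h])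
    exact Finset.card_lt_card (lt_of_le_of_ne h1 this)
  · intro α _ γ _ hsub
    have h1 := (jn_subset.mp hsub.subset).1
    rcases eq_or_lt_of_le h1 with rfl | hlt
    · exact Or.inl rfl
    · exact Or.inr (Finset.card_lt_card hlt)
  · intro α _ hmem
    obtain ⟨γ, δ, _, hδ, _, heq⟩ := mem_joinC.mp hmem
    obtain ⟨rfl, rfl⟩ := jn_inj.mp heq
    rcases Finset.mem_insert.mp hδ with h | h
    · exact hσne h
    · exact hσB' h
  · intro α _ hmem
    obtain ⟨γ, δ, _, hδ, _, heq⟩ := mem_joinC.mp hmem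
    obtain ⟨rfl, rfl⟩ := jn_inj.mp heq
    rcases Finset.mem_insert.mp hδ with h | h
    · exact hτne h
    · exact hτB' h
  · intro α _ γ _ h; exact (jn_inj.mp h).1
  · intro α _ γ _ h; exact (jn_inj.mp h).1
  · intro α _ γ _ h; exact hστ (jn_inj.mp h).2

/-- Transporting a collapse sequence of `B` to the join. -/
lemma join_collapse_seq (A : Finset (Finset V)) {B B' : Finset (Finset W)}
    (h : Relation.ReflTransGen CollapseStep B B') (hB : (∅ : Finset W) ∉ B) :
    Relation.ReflTransGen CollapseStep (joinC A B) (joinC A B') := by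
  induction h using Relation.ReflTransGen.head_induction_on with
  | refl => exact Relation.ReflTransGen.refl
  | head hstep _ ih =>
    rename_i a c _
    have hc : (∅ : Finset W) ∉ c := fun hm => hB (collapseStep_subset hstep hm)
    exact (join_step A hB hstep).trans (ih hc)

/-- A cone (join with a single vertex) over a complex with nonempty faces collapses
to that vertex. -/
lemma cone_collapsible (A : Finset (Finset V)) (hA : ∀ s ∈ A, s.Nonempty) (w : W) :
    Relation.ReflTransGen CollapseStep (joinC A ({{w}} : Finset (Finset W)))
      {({Sum.inr w} : Finset (V ⊕ W))} := by
  have hjn : ({({Sum.inr w} : Finset (V ⊕ W))} : Finset (Finset (V ⊕ W)))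
      = {jn ∅ {w}} := by simp [jn]
  have hAe : ∀ α ∈ A, α ≠ ∅ := fun α hα => (hA α hα).ne_empty
  have hkey : joinC A ({{w}} : Finset (Finset W))
      = {jn (∅ : Finset V) {w}} ∪ A.image (fun α => jn α ∅)
          ∪ A.image (fun α => jn α {w}) := by
    ext s
    simp only [Finset.mem_union, Finset.mem_image, mem_joinC, Finset.mem_singleton]
    constructor
    · rintro ⟨α, β, hα, hβ, hne, rfl⟩
      simp only [Finset.mem_insert, Finset.mem_singleton] at hα hβ
      rcases hβ with rfl | rfl
      · rcases hα with rfl | hα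
        · exact absurd ⟨rfl, rfl⟩ hne
        · exact Or.inl (Or.inr ⟨α, hα, rfl⟩)
      · rcases hα with rfl | hα
        · exact Or.inl (Or.inl rfl)
        · exact Or.inr ⟨α, hα, rfl⟩
    · rintro ((rfl | ⟨α, hα, rfl⟩) | ⟨α, hα, rfl⟩)
      · exact ⟨∅, {w}, by simp, by simp, by simp, rfl⟩
      · exact ⟨α, ∅, by simp [hα], by simp, by simp [hAe α hα], rfl⟩
      · exact ⟨α, {w}, by simp [hα], by simp, by simp, rfl⟩
  rw [hkey, hjn]
  have hwne : (∅ : Finset W) ≠ {w} := Ne.symm (Finset.singleton_ne_empty w)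
  refine genCollapse {jn (∅ : Finset V) {w}} (fun α => jn α ∅) (fun α => jn α {w})
    A.card A le_rfl ?_ ?_ ?_ ?_ ?_ ?_ ?_ ?_ ?_
  · intro α _
    refine ⟨jn_subset.mpr ⟨le_rfl, by simp⟩, fun h => ?_⟩
    exact hwne (jn_inj.mp (subset_antisymm (jn_subset.mpr ⟨le_rfl, by simp⟩) h)).2
  · intro α hα ρ hρ hsub
    rw [Finset.mem_singleton] at hρ
    subst hρ
    have := (jn_subset.mp hsub.subset).1
    exact hAe α hα (Finset.subset_empty.mp this)
  · intro α _ γ _ hsub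
    have h1 := (jn_subset.mp hsub.subset).1
    have : α ≠ γ := fun h => hsub.ne (by rw [h])
    exact Finset.card_lt_card (lt_of_le_of_ne h1 this)
  · intro α _ γ _ hsub
    have h1 := (jn_subset.mp hsub.subset).1
    rcases eq_or_lt_of_le h1 with rfl | hlt
    · exact Or.inl rfl
    · exact Or.inr (Finset.card_lt_card hlt)
  · intro α hα hmem
    rw [Finset.mem_singleton] at hmem
    exact hwne (jn_inj.mp hmem).2
  · intro α hα hmem
    rw [Finset.mem_singleton] at hmem
    exact hAe α hα (jn_inj.mp hmem).1
  · intro α _ γ _ h; exact (jn_inj.mp h).1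
  · intro α _ γ _ h; exact (jn_inj.mp h).1
  · intro α _ γ _ h; exact hwne (jn_inj.mp h).2

/-- the join of two collapsible finite simplicial complexes is collapsible
(in particular, a cone over a collapsible complex is collapsible). -/
theorem join_collapsible
    (A : Finset (Finset V)) (B : Finset (Finset W))
    (hA : (∀ s ∈ A, s.Nonempty) ∧ ∀ s ∈ A, ∀ t ⊆ s, t.Nonempty → t ∈ A)
    (hB : (∀ s ∈ B, s.Nonempty) ∧ ∀ s ∈ B, ∀ t ⊆ s, t.Nonempty → t ∈ B)
    (hAc : Collapsible A) (hBc : Collapsible B) :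
    Collapsible (joinC A B) := by
  obtain ⟨w, hw⟩ := hBc
  have hBne : (∅ : Finset W) ∉ B := fun h => (hB.1 ∅ h).ne_empty rfl
  refine ⟨Sum.inr w, ?_⟩
  exact (join_collapse_seq A hw hBne).trans (cone_collapsible A hA.1 w)
end
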